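/- Let μ be a Borel probability measure on ℝⁿ with compact support and let m be an integer with 1 ≤ m ≤ n. Then dim_P^m μ = m if and only if m ≤ D(μ), where D(μ) = inf_{θ∈(0,1)} dim_{P,θ}^n μ is the critical point of μ. -/

import Mathlib

open MeasureTheory Metric Filter Set Topology
open scoped ENNReal

noncomputable section
open scoped Classical

/-- The support of a Borel measure `μ`: the set of points all of whose
neighborhoods have positive measure. -/
def msupp {n : ℕ} (μ : Measure (EuclideanSpace ℝ (Fin n))) :
    Set (EuclideanSpace ℝ (Fin n)) :=
  {x | ∀ r : ℝ, 0 < r → 0 < μ (Metric.ball x r)}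

/-- The Assouad dimension of a set `E ⊆ ℝⁿ`: the infimum of all `s ≥ 0` for which
there is `C > 0` such that for all `0 < r < R` and `x ∈ E`, the set `E ∩ B(x,R)`
can be covered by at most `C (R/r)^s` balls of radius `r`. -/
def dimA {n : ℕ} (E : Set (EuclideanSpace ℝ (Fin n))) : ℝ :=
  sInf {s : ℝ | 0 ≤ s ∧ ∃ C : ℝ, 0 < C ∧ ∀ x ∈ E, ∀ r R : ℝ, 0 < r → r < R →
    ∃ F : Finset (EuclideanSpace ℝ (Fin n)), (F.card : ℝ) ≤ C * (R / r) ^ s ∧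
      E ∩ Metric.closedBall x R ⊆ ⋃ y ∈ F, Metric.closedBall y r}

/-- The packing dimension of a measure:
`dim_P μ = sup {t ≥ 0 : liminf_{r→0} μ(B(x,r))/r^t = 0 for μ-a.e. x}`. -/
def dimP {n : ℕ} (μ : Measure (EuclideanSpace ℝ (Fin n))) : ℝ :=
  sSup {t : ℝ | 0 ≤ t ∧ ∀ᵐ x ∂μ,
    Filter.liminf (fun r : ℝ =>
      μ (Metric.closedBall x r) / ENNReal.ofReal (r ^ t)) (𝓝[>] 0) = 0}

/-- The potential `F_m^μ(x,r) = ∫ min{1, r^m |x-y|^{-m}} dμ(y)`, with the convention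
that the integrand equals `1` when `y = x`. -/
def Fpot {n : ℕ} (m : ℝ) (μ : Measure (EuclideanSpace ℝ (Fin n)))
    (x : EuclideanSpace ℝ (Fin n)) (r : ℝ) : ℝ≥0∞ :=
  ∫⁻ y, ENNReal.ofReal (if y = x then 1 else min 1 (r ^ m * ‖x - y‖ ^ (-m))) ∂μ

/-- The `m`-dimensional packing dimension profile
`dim_P^m μ = sup {t ≥ 0 : liminf_{r→0} r^{-t} F_m^μ(x,r) = 0 for μ-a.e. x}`. -/
def dimPprofile {n : ℕ} (m : ℝ) (μ : Measure (EuclideanSpace ℝ (Fin n))) : ℝ :=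
  sSup {t : ℝ | 0 ≤ t ∧ ∀ᵐ x ∂μ,
    Filter.liminf (fun r : ℝ => Fpot m μ x r / ENNReal.ofReal (r ^ t)) (𝓝[>] 0) = 0}

/-- The potential
`F_{t,s,θ}^μ(x,r) = ∫ min{1, r^t |x-y|^{-t}, r^{θ(s-t)+t} |x-y|^{-s}} dμ(y)`,
with the convention that the integrand equals `1` when `y = x`. -/
def Ftheta {n : ℕ} (t s θ : ℝ) (μ : Measure (EuclideanSpace ℝ (Fin n)))
    (x : EuclideanSpace ℝ (Fin n)) (r : ℝ) : ℝ≥0∞ :=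
  ∫⁻ y, ENNReal.ofReal (if y = x then 1 else
    min (min 1 (r ^ t * ‖x - y‖ ^ (-t))) (r ^ (θ * (s - t) + t) * ‖x - y‖ ^ (-s))) ∂μ

/-- The `θ`-profile
`dim_{P,θ}^s μ = sup {t ∈ [0,s] : liminf_{r→0} r^{-t} F_{t,s,θ}^μ(x,r) = 0 for μ-a.e. x}`. -/
def dimPtheta {n : ℕ} (s θ : ℝ) (μ : Measure (EuclideanSpace ℝ (Fin n))) : ℝ :=
  sSup {t : ℝ | t ∈ Set.Icc 0 s ∧ ∀ᵐ x ∂μ,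
    Filter.liminf (fun r : ℝ => Ftheta t s θ μ x r / ENNReal.ofReal (r ^ t)) (𝓝[>] 0) = 0}

/-- The critical point `D(μ) = inf_{θ ∈ (0,1)} dim_{P,θ}^n μ` of a measure on `ℝⁿ`. -/
def Dcrit (n : ℕ) (μ : Measure (EuclideanSpace ℝ (Fin n))) : ℝ :=
  sInf ((fun θ : ℝ => dimPtheta (n : ℝ) θ μ) '' Set.Ioo 0 1)

/-!
Both `dim_P^m μ` and `dim_{P,θ}^n μ` are suprema of down-closed sets of exponents `t`, and on a
bounded support `F_m^μ(x, r) ≥ c r^m`, so `dim_P^m μ ≤ m`. Thus `dim_P^m μ = m` says that every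
`t < m` is admissible for `F_m`, and `m ≤ D(μ)` that every `t < m` is admissible for
`F_{t,n,θ}` for every `θ ∈ (0,1)`.
Writing `ρ = r/|x-y|` and `q = r^θ/|x-y|`, the kernel of `F_m` is `min 1 ρ^m` and that of
`F_{t,n,θ}` is `min (min 1 ρ^t) (ρ^t q^(n-t))`, while `r^((θ-1)(m-t)) ρ^m = ρ^t q^(m-t)`.
Hence exponent `m - θ(m-t)` for `F_m` yields exponent `t` for `F_{t,n,θ}`, for every `θ ≤ 1`.
Conversely, if `θ(n-t) < m-t` then `r^(θ(n-t)+t) |x-y|^(-n) ≥ ρ^m` once `r` is small compared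
with the diameter of the support, so `F_m ≤ F_{t,n,θ}` and exponent `t` passes back to `F_m`.
-/

section Kernels

open Real

def profileKernel (m r u : ℝ) : ℝ := min 1 (r ^ m * u ^ (-m))

def thetaKernel (t s θ r u : ℝ) : ℝ :=
  min (min 1 (r ^ t * u ^ (-t))) (r ^ (θ * (s - t) + t) * u ^ (-s))

lemma rpow_mul_rpow_neg {r u : ℝ} (hr : 0 ≤ r) (hu : 0 ≤ u) (a : ℝ) :
    r ^ a * u ^ (-a) = (r / u) ^ a := by
  rw [div_rpow hr hu, rpow_neg hu, div_eq_mul_inv]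

lemma min_one_rpow_le_rpow {ρ a b : ℝ} (hρ : 0 < ρ) (ha : 0 ≤ a) (hab : a ≤ b) :
    min 1 (ρ ^ b) ≤ ρ ^ a := by
  rcases le_total ρ 1 with h | h
  · exact (min_le_right _ _).trans (rpow_le_rpow_of_exponent_ge hρ h hab)
  · exact (min_le_left _ _).trans (one_le_rpow h ha)

lemma rpow_div_le_profileKernel {m r u D : ℝ} (hm : 0 ≤ m) (hr : 0 ≤ r) (hrD : r ≤ D)
    (hu : 0 < u) (huD : u ≤ D) : (r / D) ^ m ≤ profileKernel m r u := by
  unfold profileKernel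
  rw [rpow_mul_rpow_neg hr hu.le]
  have hD : 0 ≤ D := hu.le.trans huD
  exact le_min (rpow_le_one (div_nonneg hr hD) (div_le_one_of_le₀ hrD hD) hm)
    (rpow_le_rpow (div_nonneg hr hD) (div_le_div_of_nonneg_left hr hu huD) hm)

lemma thetaKernel_le_mul_thetaKernel {t t' s θ r u C : ℝ} (hr0 : 0 < r) (hr1 : r ≤ 1)
    (hu : 0 < u) (hθ : 0 ≤ θ) (htt : t' ≤ t) (hC : 1 ≤ C) (huC : u ^ (t - t') ≤ C) :
    thetaKernel t' s θ r u ≤ C * r ^ (t' - t) * thetaKernel t s θ r u := by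
  have hc : 1 ≤ C * r ^ (t' - t) := one_le_mul_of_one_le_of_one_le hC
    (one_le_rpow_of_pos_of_le_one_of_nonpos hr0 hr1 (by linarith))
  unfold thetaKernel
  rw [mul_min_of_nonneg _ _ (by positivity), mul_min_of_nonneg _ _ (by positivity), mul_one]
  refine le_min (le_min (((min_le_left _ _).trans (min_le_left _ _)).trans hc) ?_) ?_
  · refine (min_le_left _ _).trans ((min_le_right _ _).trans ?_)
    calc r ^ t' * u ^ (-t') = r ^ (t' - t) * r ^ t * (u ^ (-t) * u ^ (t - t')) := by
          rw [← rpow_add hr0, ← rpow_add hu]; ring_nf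
      _ ≤ r ^ (t' - t) * r ^ t * (u ^ (-t) * C) := by gcongr
      _ = C * r ^ (t' - t) * (r ^ t * u ^ (-t)) := by ring
  · refine (min_le_right _ _).trans ?_
    calc r ^ (θ * (s - t') + t') * u ^ (-s)
        ≤ r ^ (t' - t + (θ * (s - t) + t)) * u ^ (-s) := by
          refine mul_le_mul_of_nonneg_right ?_ (by positivity)
          exact rpow_le_rpow_of_exponent_ge hr0 hr1 (by nlinarith)
      _ = r ^ (t' - t) * (r ^ (θ * (s - t) + t) * u ^ (-s)) := by rw [rpow_add hr0, mul_assoc]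
      _ ≤ C * r ^ (t' - t) * (r ^ (θ * (s - t) + t) * u ^ (-s)) := by
          rw [mul_assoc C]; exact le_mul_of_one_le_left (by positivity) hC

lemma thetaKernel_tail_eq {t s θ r u : ℝ} (hr : 0 < r) (hu : 0 < u) :
    r ^ (θ * (s - t) + t) * u ^ (-s) = (r / u) ^ t * (r ^ θ / u) ^ (s - t) := by
  rw [← rpow_mul_rpow_neg hr.le hu.le, ← rpow_mul_rpow_neg (by positivity) hu.le,
    ← rpow_mul hr.le, mul_mul_mul_comm, ← rpow_add hr, ← rpow_add hu]
  ring_nf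

lemma thetaKernel_le_rpow_mul_profileKernel {t s θ m r u : ℝ} (hr0 : 0 < r) (hr1 : r ≤ 1)
    (hu : 0 < u) (hθ : θ ≤ 1) (htm : t ≤ m) (hms : m ≤ s) :
    thetaKernel t s θ r u ≤ r ^ ((θ - 1) * (m - t)) * profileKernel m r u := by
  have hc : 1 ≤ r ^ ((θ - 1) * (m - t)) := one_le_rpow_of_pos_of_le_one_of_nonpos hr0 hr1
    (mul_nonpos_of_nonpos_of_nonneg (by linarith) (by linarith))
  have hprofile : r ^ ((θ - 1) * (m - t)) * (r ^ m * u ^ (-m))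
      = (r / u) ^ t * (r ^ θ / u) ^ (m - t) := by
    rw [← rpow_mul_rpow_neg hr0.le hu.le, ← rpow_mul_rpow_neg (by positivity) hu.le,
      ← rpow_mul hr0.le, ← mul_assoc, ← rpow_add hr0, mul_mul_mul_comm, ← rpow_add hr0,
      ← rpow_add hu]
    ring_nf
  unfold thetaKernel profileKernel
  rw [mul_min_of_nonneg _ _ (by positivity), mul_one, hprofile, rpow_mul_rpow_neg hr0.le hu.le,
    thetaKernel_tail_eq hr0 hu]
  refine le_min (((min_le_left _ _).trans (min_le_left _ _)).trans hc) ?_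
  calc min (min 1 ((r / u) ^ t)) ((r / u) ^ t * (r ^ θ / u) ^ (s - t))
      ≤ min ((r / u) ^ t) ((r / u) ^ t * (r ^ θ / u) ^ (s - t)) :=
        min_le_min_right _ (min_le_right _ _)
    _ = (r / u) ^ t * min 1 ((r ^ θ / u) ^ (s - t)) := by
        rw [mul_min_of_nonneg _ _ (by positivity), mul_one]
    _ ≤ (r / u) ^ t * (r ^ θ / u) ^ (m - t) := by
        gcongr
        exact min_one_rpow_le_rpow (by positivity) (by linarith) (by linarith)

lemma profileKernel_le_thetaKernel {t s θ m r u : ℝ} (hr : 0 < r) (hu : 0 < u) (ht : 0 ≤ t)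
    (htm : t ≤ m) (hur : u ^ (s - m) ≤ r ^ (θ * (s - t) + t - m)) :
    profileKernel m r u ≤ thetaKernel t s θ r u := by
  unfold thetaKernel profileKernel
  refine le_min (le_min (min_le_left _ _) ?_) ((min_le_right _ _).trans ?_)
  · rw [rpow_mul_rpow_neg hr.le hu.le, rpow_mul_rpow_neg hr.le hu.le]
    exact min_one_rpow_le_rpow (div_pos hr hu) ht htm
  · calc r ^ m * u ^ (-m) = r ^ m * u ^ (-s) * u ^ (s - m) := by
          rw [mul_assoc, ← rpow_add hu]; ring_nf
      _ ≤ r ^ m * u ^ (-s) * r ^ (θ * (s - t) + t - m) := by gcongr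
      _ = r ^ (θ * (s - t) + t) * u ^ (-s) := by
          rw [mul_right_comm, ← rpow_add hr]; ring_nf

end Kernels

lemma le_sSup_iff_Ico_subset {S : Set ℝ} {m : ℝ} (hS0 : ∀ t ∈ S, 0 ≤ t) (hS : BddAbove S)
    (hdown : ∀ t ∈ S, Icc 0 t ⊆ S) : m ≤ sSup S ↔ Ico 0 m ⊆ S := by
  refine ⟨fun h t ht => ?_, fun h => le_of_forall_lt_imp_le_of_dense fun c hc => ?_⟩
  · rcases S.eq_empty_or_nonempty with rfl | hne
    · rw [Real.sSup_empty] at h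
      exact absurd (ht.1.trans_lt (ht.2.trans_le h)) (lt_irrefl 0)
    · obtain ⟨t', ht'S, htt'⟩ := exists_lt_of_lt_csSup hne (ht.2.trans_le h)
      exact hdown t' ht'S ⟨ht.1, htt'.le⟩
  · rcases lt_or_ge c 0 with hc0 | hc0
    · exact hc0.le.trans (Real.sSup_nonneg hS0)
    · exact le_csSup hS (h ⟨hc0, hc⟩)

lemma exists_mem_Ioo_mul_lt {a b : ℝ} (ha : 0 < a) (hb : 0 ≤ b) :
    ∃ θ ∈ Ioo (0 : ℝ) 1, θ * b < a := by
  obtain ⟨c, hc, hcb⟩ := exists_pos_mul_lt ha b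
  refine ⟨min c (1 / 2), ⟨lt_min hc (by norm_num), (min_le_right _ _).trans_lt (by norm_num)⟩, ?_⟩
  calc min c (1 / 2) * b ≤ c * b := mul_le_mul_of_nonneg_right (min_le_left _ _) hb
    _ < a := by linarith

section Transfer

open Filter

lemma liminf_eq_zero_of_le_const_mul {α : Type*} {l : Filter α} [l.NeBot] {f g : α → ℝ≥0∞}
    {c : ℝ≥0∞} (hc : c ≠ ⊤) (hg : liminf g l = 0) (h : ∀ᶠ r in l, f r ≤ c * g r) :
    liminf f l = 0 :=
  le_antisymm ((liminf_le_liminf h).trans_eq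
    (by rw [ENNReal.liminf_const_mul_of_ne_top hc, hg, mul_zero])) bot_le

lemma div_ofReal_rpow_le {A B : ℝ≥0∞} {r a b C : ℝ} (hr : 0 < r) (hC : 0 ≤ C)
    (h : A ≤ ENNReal.ofReal (C * r ^ (a - b)) * B) :
    A / ENNReal.ofReal (r ^ a) ≤ ENNReal.ofReal C * (B / ENNReal.ofReal (r ^ b)) := by
  rw [ENNReal.div_le_iff (ENNReal.ofReal_pos.2 (Real.rpow_pos_of_pos hr a)).ne'
    ENNReal.ofReal_ne_top]
  refine h.trans_eq ?_
  rw [Real.rpow_sub hr, ENNReal.ofReal_mul hC,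
    ENNReal.ofReal_div_of_pos (Real.rpow_pos_of_pos hr b),
    div_eq_mul_inv, div_eq_mul_inv]
  ring

lemma lintegral_ofReal_ite_le_mul {E : Type*} [NormedAddCommGroup E] [DecidableEq E]
    [MeasurableSpace E] {μ : Measure E} {x : E} {k₁ k₂ : ℝ → ℝ} {c : ℝ} (hc : 1 ≤ c)
    (h : ∀ᵐ y ∂μ, y ≠ x → k₁ ‖x - y‖ ≤ c * k₂ ‖x - y‖) :
    ∫⁻ y, ENNReal.ofReal (if y = x then 1 else k₁ ‖x - y‖) ∂μ ≤
      ENNReal.ofReal c * ∫⁻ y, ENNReal.ofReal (if y = x then 1 else k₂ ‖x - y‖) ∂μ := by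
  rw [← lintegral_const_mul' _ _ ENNReal.ofReal_ne_top]
  refine lintegral_mono_ae (h.mono fun y hy => ?_)
  rw [← ENNReal.ofReal_mul (by linarith)]
  refine ENNReal.ofReal_le_ofReal ?_
  split_ifs with hyx
  · linarith
  · exact hy hyx

end Transfer

section Admissible

open Filter Real

variable {n : ℕ} {μ : Measure (EuclideanSpace ℝ (Fin n))}

def ProfileAdmissible (m : ℝ) (μ : Measure (EuclideanSpace ℝ (Fin n))) (t : ℝ) : Prop :=
  ∀ᵐ x ∂μ, liminf (fun r : ℝ => Fpot m μ x r / ENNReal.ofReal (r ^ t)) (𝓝[>] 0) = 0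

def ThetaAdmissible (s θ : ℝ) (μ : Measure (EuclideanSpace ℝ (Fin n))) (t : ℝ) : Prop :=
  ∀ᵐ x ∂μ, liminf (fun r : ℝ => Ftheta t s θ μ x r / ENNReal.ofReal (r ^ t)) (𝓝[>] 0) = 0

lemma Fpot_eq_lintegral_profileKernel (m : ℝ) (μ : Measure (EuclideanSpace ℝ (Fin n)))
    (x : EuclideanSpace ℝ (Fin n)) (r : ℝ) :
    Fpot m μ x r = ∫⁻ y, ENNReal.ofReal (if y = x then 1 else profileKernel m r ‖x - y‖) ∂μ :=
  rfl

lemma Ftheta_eq_lintegral_thetaKernel (t s θ : ℝ) (μ : Measure (EuclideanSpace ℝ (Fin n)))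
    (x : EuclideanSpace ℝ (Fin n)) (r : ℝ) :
    Ftheta t s θ μ x r =
      ∫⁻ y, ENNReal.ofReal (if y = x then 1 else thetaKernel t s θ r ‖x - y‖) ∂μ :=
  rfl

lemma ae_mem_msupp : ∀ᵐ x ∂μ, x ∈ msupp μ := by
  have : msupp μ = μ.support := by
    ext x
    exact (nhds_basis_ball.mem_measureSupport).symm
  exact this ▸ Measure.support_mem_ae

lemma exists_ae_ae_norm_sub_le (hb : Bornology.IsBounded (msupp μ)) :
    ∃ D : ℝ, 1 ≤ D ∧ ∀ᵐ x ∂μ, ∀ᵐ y ∂μ, ‖x - y‖ ≤ D := by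
  obtain ⟨C, hC⟩ := isBounded_iff.1 hb
  refine ⟨max C 1, le_max_right _ _, ?_⟩
  filter_upwards [ae_mem_msupp] with x hx
  filter_upwards [ae_mem_msupp] with y hy
  rw [← dist_eq_norm]
  exact (hC hx hy).trans (le_max_left _ _)

lemma ProfileAdmissible.mono {m t t' : ℝ} (hP : ProfileAdmissible m μ t) (htt : t' ≤ t) :
    ProfileAdmissible m μ t' := by
  filter_upwards [hP] with x hx
  refine liminf_eq_zero_of_le_const_mul ENNReal.one_ne_top hx ?_
  filter_upwards [Ioo_mem_nhdsGT one_pos] with r hr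
  rw [one_mul]
  exact ENNReal.div_le_div_left
    (ENNReal.ofReal_le_ofReal (rpow_le_rpow_of_exponent_ge hr.1 hr.2.le htt)) _

lemma not_profileAdmissible_self [NeZero μ] (hb : Bornology.IsBounded (msupp μ)) {m : ℝ}
    (hm : 0 ≤ m) : ¬ ProfileAdmissible m μ m := by
  intro hP
  obtain ⟨D, hD, hDb⟩ := exists_ae_ae_norm_sub_le hb
  have hD0 : 0 < D := one_pos.trans_le hD
  obtain ⟨x, hx, hxD⟩ := (hP.and hDb).exists
  have hpos : 0 < ENNReal.ofReal (D ^ m)⁻¹ * μ univ :=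
    ENNReal.mul_pos (ENNReal.ofReal_pos.2 (inv_pos.2 (rpow_pos_of_pos hD0 m))).ne'
      (Measure.measure_univ_ne_zero.2 (NeZero.ne μ))
  have hlower : ∀ᶠ r in 𝓝[>] 0,
      ENNReal.ofReal (D ^ m)⁻¹ * μ univ ≤ Fpot m μ x r / ENNReal.ofReal (r ^ m) := by
    filter_upwards [Ioo_mem_nhdsGT one_pos] with r hr
    have hrD : r ≤ D := hr.2.le.trans hD
    rw [ENNReal.le_div_iff_mul_le (Or.inl (ENNReal.ofReal_pos.2 (rpow_pos_of_pos hr.1 m)).ne')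
      (Or.inl ENNReal.ofReal_ne_top), mul_right_comm,
      ← ENNReal.ofReal_mul (inv_pos.2 (rpow_pos_of_pos hD0 m)).le, mul_comm _ (r ^ m),
      ← div_eq_mul_inv, ← div_rpow hr.1.le hD0.le, ← lintegral_const,
      Fpot_eq_lintegral_profileKernel]
    refine lintegral_mono_ae (hxD.mono fun y hy => ENNReal.ofReal_le_ofReal ?_)
    split_ifs with hyx
    · exact rpow_le_one (div_nonneg hr.1.le hD0.le) (div_le_one_of_le₀ hrD hD0.le) hm
    · exact rpow_div_le_profileKernel hm hr.1.le hrD (norm_sub_pos_iff.2 (Ne.symm hyx)) hy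
  have := (le_liminf_of_le (by isBoundedDefault) hlower).trans_eq hx
  exact hpos.ne' (le_zero_iff.1 this)

lemma ThetaAdmissible.mono (hb : Bornology.IsBounded (msupp μ)) {s θ t t' : ℝ} (hθ : 0 ≤ θ)
    (hQ : ThetaAdmissible s θ μ t) (htt : t' ≤ t) : ThetaAdmissible s θ μ t' := by
  obtain ⟨D, hD, hDb⟩ := exists_ae_ae_norm_sub_le hb
  set C := max 1 (D ^ (t - t'))
  filter_upwards [hQ, hDb] with x hx hxD
  refine liminf_eq_zero_of_le_const_mul (c := ENNReal.ofReal C) ENNReal.ofReal_ne_top hx ?_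
  filter_upwards [Ioo_mem_nhdsGT one_pos] with r hr
  have hc : 1 ≤ C * r ^ (t' - t) := one_le_mul_of_one_le_of_one_le (le_max_left _ _)
    (one_le_rpow_of_pos_of_le_one_of_nonpos hr.1 hr.2.le (by linarith))
  refine div_ofReal_rpow_le hr.1 (by positivity) ?_
  rw [Ftheta_eq_lintegral_thetaKernel, Ftheta_eq_lintegral_thetaKernel]
  refine lintegral_ofReal_ite_le_mul hc ?_
  filter_upwards [hxD] with y hy hyx
  exact thetaKernel_le_mul_thetaKernel hr.1 hr.2.le (norm_sub_pos_iff.2 (Ne.symm hyx)) hθ htt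
    (le_max_left _ _) ((rpow_le_rpow (norm_nonneg _) hy (by linarith)).trans (le_max_right _ _))

lemma ThetaAdmissible.of_profileAdmissible {m s θ t : ℝ} (hθ : θ ≤ 1) (htm : t ≤ m)
    (hms : m ≤ s) (hP : ProfileAdmissible m μ (m - θ * (m - t))) : ThetaAdmissible s θ μ t := by
  filter_upwards [hP] with x hx
  refine liminf_eq_zero_of_le_const_mul (c := ENNReal.ofReal 1) ENNReal.ofReal_ne_top hx ?_
  filter_upwards [Ioo_mem_nhdsGT one_pos] with r hr
  have hc : 1 ≤ r ^ ((θ - 1) * (m - t)) := one_le_rpow_of_pos_of_le_one_of_nonpos hr.1 hr.2.le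
    (mul_nonpos_of_nonpos_of_nonneg (by linarith) (by linarith))
  refine div_ofReal_rpow_le hr.1 zero_le_one ?_
  rw [one_mul, show t - (m - θ * (m - t)) = (θ - 1) * (m - t) by ring,
    Ftheta_eq_lintegral_thetaKernel, Fpot_eq_lintegral_profileKernel]
  refine lintegral_ofReal_ite_le_mul hc (ae_of_all _ fun y hyx => ?_)
  exact thetaKernel_le_rpow_mul_profileKernel hr.1 hr.2.le (norm_sub_pos_iff.2 (Ne.symm hyx))
    hθ htm hms

lemma ProfileAdmissible.of_thetaAdmissible (hb : Bornology.IsBounded (msupp μ))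
    {m s θ t : ℝ} (ht : 0 ≤ t) (htm : t ≤ m) (hms : m ≤ s) (hθ : θ * (s - t) < m - t)
    (hQ : ThetaAdmissible s θ μ t) : ProfileAdmissible m μ t := by
  obtain ⟨D, hD, hDb⟩ := exists_ae_ae_norm_sub_le hb
  have hsmall : ∀ᶠ r in 𝓝[>] 0, D ^ (s - m) ≤ r ^ (θ * (s - t) + t - m) :=
    (tendsto_rpow_neg_nhdsGT_zero (by linarith)).eventually_ge_atTop _
  filter_upwards [hQ, hDb] with x hx hxD
  refine liminf_eq_zero_of_le_const_mul ENNReal.one_ne_top hx ?_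
  filter_upwards [self_mem_nhdsWithin, hsmall] with r (hr : 0 < r) hrD
  rw [one_mul, Fpot_eq_lintegral_profileKernel, Ftheta_eq_lintegral_thetaKernel]
  refine ENNReal.div_le_div_right (lintegral_mono_ae (hxD.mono fun y hy => ?_)) _
  refine ENNReal.ofReal_le_ofReal ?_
  split_ifs with hyx
  · exact le_rfl
  · exact profileKernel_le_thetaKernel hr (norm_sub_pos_iff.2 (Ne.symm hyx)) ht htm
      ((rpow_le_rpow (norm_nonneg _) hy (by linarith)).trans hrD)

lemma dimPprofile_eq_self_iff [NeZero μ] (hb : Bornology.IsBounded (msupp μ)) {m : ℝ}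
    (hm : 0 ≤ m) : dimPprofile m μ = m ↔ ∀ t ∈ Ico 0 m, ProfileAdmissible m μ t := by
  have hle : ∀ t ∈ {t | 0 ≤ t ∧ ProfileAdmissible m μ t}, t ≤ m := fun t ht =>
    le_of_not_gt fun hmt => not_profileAdmissible_self hb hm (ht.2.mono hmt.le)
  change sSup {t | 0 ≤ t ∧ ProfileAdmissible m μ t} = m ↔ _
  rw [le_antisymm_iff, and_iff_right (Real.sSup_le hle hm),
    le_sSup_iff_Ico_subset (fun t ht => ht.1) ⟨m, hle⟩
      (fun t ht t' ht' => ⟨ht'.1, ht.2.mono ht'.2⟩)]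
  exact ⟨fun h t ht => (h ht).2, fun h t ht => ⟨ht.1, h t ht⟩⟩

lemma le_dimPtheta_iff (hb : Bornology.IsBounded (msupp μ)) {m s θ : ℝ} (hθ : 0 ≤ θ)
    (hms : m ≤ s) : m ≤ dimPtheta s θ μ ↔ ∀ t ∈ Ico 0 m, ThetaAdmissible s θ μ t := by
  change m ≤ sSup {t | t ∈ Icc 0 s ∧ ThetaAdmissible s θ μ t} ↔ _
  have hdown : ∀ t ∈ {t | t ∈ Icc 0 s ∧ ThetaAdmissible s θ μ t},
      Icc 0 t ⊆ {t | t ∈ Icc 0 s ∧ ThetaAdmissible s θ μ t} := fun t ht t' ht' =>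
    ⟨⟨ht'.1, ht'.2.trans ht.1.2⟩, ht.2.mono hb hθ ht'.2⟩
  rw [le_sSup_iff_Ico_subset (fun t ht => ht.1.1) ⟨s, fun t ht => ht.1.2⟩ hdown]
  exact ⟨fun h t ht => (h ht).2, fun h t ht => ⟨⟨ht.1, ht.2.le.trans hms⟩, h t ht⟩⟩

lemma le_Dcrit_iff {m : ℝ} : m ≤ Dcrit n μ ↔ ∀ θ ∈ Ioo (0 : ℝ) 1, m ≤ dimPtheta n θ μ := by
  have hbdd : BddBelow ((fun θ : ℝ => dimPtheta n θ μ) '' Ioo 0 1) :=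
    ⟨0, forall_mem_image.2 fun θ _ => Real.sSup_nonneg fun t ht => ht.1.1⟩
  rw [Dcrit, le_csInf_iff hbdd ((nonempty_Ioo.2 zero_lt_one).image _), forall_mem_image]

end Admissible

theorem statement7_general (n : ℕ) (μ : Measure (EuclideanSpace ℝ (Fin n))) [IsProbabilityMeasure μ]
    (hE : IsCompact (msupp μ)) (m : ℕ) (hmn : m ≤ n) :
    dimPprofile (m : ℝ) μ = m ↔ (m : ℝ) ≤ Dcrit n μ := by
  have hb := hE.isBounded
  have hmn' : (m : ℝ) ≤ n := by exact_mod_cast hmn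
  rw [dimPprofile_eq_self_iff hb m.cast_nonneg, le_Dcrit_iff]
  constructor
  · intro hP θ hθ
    refine (le_dimPtheta_iff hb hθ.1.le hmn').2 fun t ht => ?_
    refine .of_profileAdmissible hθ.2.le ht.2.le hmn' (hP _ ⟨?_, ?_⟩) <;>
      nlinarith [hθ.1, hθ.2, ht.1, ht.2]
  · intro hD t ht
    obtain ⟨θ, hθ, hθt⟩ :=
      exists_mem_Ioo_mul_lt (sub_pos.2 ht.2) (sub_nonneg.2 (ht.2.le.trans hmn'))
    exact .of_thetaAdmissible hb ht.1 ht.2.le hmn' hθt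
      ((le_dimPtheta_iff hb hθ.1.le hmn').1 (hD θ hθ) t ht)

/-- For a Borel probability measure `μ` with compact support on `ℝⁿ` and an
integer `1 ≤ m ≤ n`: `dim_P^m μ = m` if and only if `m ≤ D(μ)`, where
`D(μ) = inf_{θ∈(0,1)} dim_{P,θ}^n μ` is the critical point of `μ`. -/
theorem statement7 (n : ℕ) (μ : Measure (EuclideanSpace ℝ (Fin n))) [IsProbabilityMeasure μ]
    (hE : IsCompact (msupp μ)) (m : ℕ) (hm : 1 ≤ m) (hmn : m ≤ n) :
    dimPprofile (m : ℝ) μ = m ↔ (m : ℝ) ≤ Dcrit n μ :=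
  statement7_general n μ hE m hmn
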